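/- Let a > 0, d ≥ 0, and let φ ∈ C([−1,0]) satisfy φ(t) < 0 for t ∈ [−1,0) and φ(0) = −d. If x : [−1,∞) → ℝ is a solution of the relay equation ẋ(t) = R(x(t−1)) with initial function φ, then x(t) = x0(t − d) for all t ≥ d, where x0 is the T0-periodic function with x0(t) = t on [0,1], x0(t) = −a(t − t0) on [1, t0+1], x0(t) = t − T0 on [t0+1, T0]. -/

import Mathlib

noncomputable def R (a x : ℝ) : ℝ := if x ≤ 0 then 1 else -a

def IsSolution (a : ℝ) (φ x : ℝ → ℝ) : Prop :=
  ContinuousOn x (Set.Ici (-1 : ℝ)) ∧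
  (∀ t ∈ Set.Icc (-1 : ℝ) 0, x t = φ t) ∧
  ∃ S : Set ℝ, (∀ A B : ℝ, (S ∩ Set.Icc A B).Finite) ∧
    ∀ t : ℝ, 0 < t → t ∉ S → HasDerivAt x (R a (x (t - 1))) t

/-!
Method of steps: on an interval where `R a (x (t - 1))` is known to be a constant `c`, the
solution is affine with slope `c`. Starting from a negative initial function, `x` rises with
slope `1` from `-d` and crosses `0` at `t = d`; one unit later the delayed argument becomes
positive, so `x` falls with slope `-a` from the value `1` until it reaches `-a` at
`d + t0 + 1`; one unit after its zero crossing the delayed argument is negative again, and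
`x` rises with slope `1` back to `0` at `d + T0`, which restarts the same cycle.
-/

open Set

theorem R_of_nonpos {a x : ℝ} (hx : x ≤ 0) : R a x = 1 := if_pos hx

theorem R_of_pos {a x : ℝ} (hx : 0 < x) : R a x = -a := if_neg hx.not_ge

theorem eq_add_mul_sub_of_hasDerivAt_off_countable {f : ℝ → ℝ} {c A B : ℝ} {s : Set ℝ}
    (hs : s.Countable) (hf : ContinuousOn f (Icc A B))
    (hderiv : ∀ t ∈ Ioo A B \ s, HasDerivAt f c t) :
    ∀ t ∈ Icc A B, f t = f A + c * (t - A) := by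
  intro t ht
  have hFTC := MeasureTheory.integral_eq_of_hasDerivAt_off_countable_of_le f (fun _ => c) ht.1 hs
    (hf.mono (Icc_subset_Icc_right ht.2))
    (fun r hr => hderiv r ⟨Ioo_subset_Ioo_right ht.2 hr.1, hr.2⟩) intervalIntegrable_const
  simp only [intervalIntegral.integral_const, smul_eq_mul] at hFTC
  linarith

theorem eq_add_mul_sub_of_delay_eq {g x : ℝ → ℝ} {S : Set ℝ} {c A B : ℝ} (hS : S.Countable)
    (hxc : ContinuousOn x (Icc A B))
    (hx' : ∀ t ∈ Ioo A B \ S, HasDerivAt x (g (x (t - 1))) t)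
    (hpast : ∀ s ∈ Ioc (A - 1) A, g (x s) = c)
    (hfuture : ∀ s ∈ Ioo A (B - 1), g (x A + c * (s - A)) = c) :
    ∀ t ∈ Icc A B, x t = x A + c * (t - A) := by
  suffices hsteps : ∀ n : ℕ, ∀ t ∈ Icc A (min B (A + n)), x t = x A + c * (t - A) by
    intro t ht
    obtain ⟨n, hn⟩ := exists_nat_ge (t - A)
    exact hsteps n t ⟨ht.1, le_min ht.2 (by linarith)⟩
  intro n
  induction n with
  | zero =>
    intro t ht
    have htA : t = A := le_antisymm (by simpa using ht.2.trans (min_le_right _ _)) ht.1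
    simp [htA]
  | succ n ih =>
    refine eq_add_mul_sub_of_hasDerivAt_off_countable hS
      (hxc.mono (Icc_subset_Icc_right (min_le_left _ _))) ?_
    rintro t ⟨⟨hAt, htB⟩, htS⟩
    rw [lt_min_iff] at htB
    push_cast at htB
    suffices hg : g (x (t - 1)) = c by
      rw [← hg]
      exact hx' t ⟨⟨hAt, htB.1⟩, htS⟩
    rcases le_or_gt (t - 1) A with h | h
    · exact hpast _ ⟨by linarith, h⟩
    · rw [ih (t - 1) ⟨h.le, le_min (by linarith) (by linarith)⟩]
      exact hfuture _ ⟨h, by linarith⟩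

namespace IsSolution

variable {a : ℝ} {φ x : ℝ → ℝ}

theorem eq_add_mul_sub (hx : IsSolution a φ x) {c A B : ℝ} (hA : 0 ≤ A)
    (hpast : ∀ s ∈ Ioc (A - 1) A, R a (x s) = c)
    (hfuture : ∀ s ∈ Ioo A (B - 1), R a (x A + c * (s - A)) = c) :
    ∀ t ∈ Icc A B, x t = x A + c * (t - A) := by
  obtain ⟨hxc, -, S, hSfin, hx'⟩ := hx
  refine eq_add_mul_sub_of_delay_eq (hSfin A B).countable
    (hxc.mono fun t ht => by simp only [mem_Ici]; linarith [ht.1]) ?_ hpast hfuture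
  rintro t ⟨ht, htS⟩
  exact hx' t (by linarith [ht.1]) fun h => htS ⟨h, ht.1.le, ht.2.le⟩

theorem eq_sub_of_initial (hx : IsSolution a φ x) {d : ℝ} (hd : 0 ≤ d)
    (hφneg : ∀ t ∈ Ico (-1 : ℝ) 0, φ t < 0) (hφ0 : φ 0 = -d) :
    ∀ t ∈ Icc 0 (d + 1), x t = t - d := by
  have hx0 : x 0 = -d := by rw [hx.2.1 0 ⟨by norm_num, le_rfl⟩, hφ0]
  have hpast : ∀ s ∈ Ioc ((0 : ℝ) - 1) 0, R a (x s) = 1 := by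
    rintro s ⟨hs1, hs2⟩
    rw [hx.2.1 s ⟨by linarith, hs2⟩]
    rcases hs2.lt_or_eq with hs | rfl
    · exact R_of_nonpos (hφneg s ⟨by linarith, hs⟩).le
    · exact R_of_nonpos (by linarith)
  have hfuture : ∀ s ∈ Ioo 0 (d + 1 - 1), R a (x 0 + 1 * (s - 0)) = 1 := by
    rintro s ⟨-, hs⟩
    exact R_of_nonpos (by rw [hx0]; linarith)
  intro t ht
  rw [hx.eq_add_mul_sub le_rfl hpast hfuture t ht, hx0]
  ring

variable {t0 T0 : ℝ}

theorem descent_and_ramp_of_ramp (hx : IsSolution a φ x) (ha : 0 < a)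
    (ht0 : a * t0 = a + 1) (hT0 : T0 = t0 + 1 + a) {u : ℝ} (hu : -1 ≤ u)
    (hramp : ∀ s ∈ Icc u (u + 1), x s = s - u) :
    (∀ s ∈ Icc (u + 1) (u + t0 + 1), x s = -a * (s - u - t0)) ∧
    ∀ s ∈ Icc (u + t0 + 1) (u + T0 + 1), x s = s - u - T0 := by
  have ht01 : 1 < t0 := by nlinarith
  have hx1 : x (u + 1) = 1 := by rw [hramp (u + 1) ⟨by linarith, le_rfl⟩]; ring
  have hdescent : ∀ s ∈ Icc (u + 1) (u + t0 + 1), x s = -a * (s - u - t0) := by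
    have hpast : ∀ s ∈ Ioc (u + 1 - 1) (u + 1), R a (x s) = -a := by
      rintro s ⟨hs1, hs2⟩
      exact R_of_pos (by rw [hramp s ⟨by linarith, hs2⟩]; linarith)
    have hfuture : ∀ s ∈ Ioo (u + 1) (u + t0 + 1 - 1),
        R a (x (u + 1) + -a * (s - (u + 1))) = -a := by
      rintro s ⟨-, hs⟩
      exact R_of_pos (by rw [hx1]; nlinarith [mul_pos ha (show 0 < u + t0 - s by linarith)])
    intro s hs
    rw [hx.eq_add_mul_sub (by linarith) hpast hfuture s hs, hx1]
    linear_combination -ht0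
  refine ⟨hdescent, ?_⟩
  have hxt0 : x (u + t0 + 1) = -a := by
    rw [hdescent (u + t0 + 1) ⟨by linarith, le_rfl⟩]; ring
  have hpast : ∀ s ∈ Ioc (u + t0 + 1 - 1) (u + t0 + 1), R a (x s) = 1 := by
    rintro s ⟨hs1, hs2⟩
    rw [hdescent s ⟨by linarith, hs2⟩]
    exact R_of_nonpos (by nlinarith)
  have hfuture : ∀ s ∈ Ioo (u + t0 + 1) (u + T0 + 1 - 1),
      R a (x (u + t0 + 1) + 1 * (s - (u + t0 + 1))) = 1 := by
    rintro s ⟨-, hs⟩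
    exact R_of_nonpos (by rw [hxt0]; linarith)
  intro s hs
  rw [hx.eq_add_mul_sub (by linarith) hpast hfuture s hs, hxt0, hT0]
  ring

theorem ramp_of_initial (hx : IsSolution a φ x) (ha : 0 < a)
    (ht0 : a * t0 = a + 1) (hT0 : T0 = t0 + 1 + a) {d : ℝ} (hd : 0 ≤ d)
    (hφneg : ∀ t ∈ Ico (-1 : ℝ) 0, φ t < 0) (hφ0 : φ 0 = -d) (n : ℕ) :
    ∀ s ∈ Icc (d + n * T0) (d + n * T0 + 1), x s = s - (d + n * T0) := by
  have hT0pos : 0 < T0 := by nlinarith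
  induction n with
  | zero =>
    intro s hs
    simp only [Nat.cast_zero, zero_mul, add_zero] at hs ⊢
    exact hx.eq_sub_of_initial hd hφneg hφ0 s ⟨by linarith [hs.1], hs.2⟩
  | succ n ih =>
    have hn : (0 : ℝ) ≤ n * T0 := by positivity
    have hnext := (hx.descent_and_ramp_of_ramp ha ht0 hT0 (by linarith) ih).2
    have ht01 : 1 < t0 := by nlinarith
    intro s hs
    push_cast at hs ⊢
    rw [hnext s ⟨by linarith [hs.1], by linarith [hs.2]⟩]
    ring

end IsSolution

theorem stmt_2_general (a : ℝ) (ha : 0 < a) (d : ℝ) (hd : 0 ≤ d) (t0 T0 : ℝ)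
    (ht0 : t0 = (a + 1) / a) (hT0 : T0 = (a + 1) ^ 2 / a)
    (φ : ℝ → ℝ)
    (hφneg : ∀ t ∈ Set.Ico (-1 : ℝ) 0, φ t < 0) (hφ0 : φ 0 = -d)
    (x : ℝ → ℝ) (hx : IsSolution a φ x)
    (x0 : ℝ → ℝ)
    (hx0per : ∀ t : ℝ, x0 (t + T0) = x0 t)
    (hx0a : ∀ t ∈ Set.Icc (0 : ℝ) 1, x0 t = t)
    (hx0b : ∀ t ∈ Set.Icc (1 : ℝ) (t0 + 1), x0 t = -a * (t - t0))
    (hx0c : ∀ t ∈ Set.Icc (t0 + 1) T0, x0 t = t - T0) :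
    ∀ t : ℝ, d ≤ t → x t = x0 (t - d) := by
  have hat0 : a * t0 = a + 1 := by rw [ht0]; field_simp
  have hT0eq : T0 = t0 + 1 + a := by rw [hT0, ht0]; field_simp; ring
  have hT0pos : 0 < T0 := by nlinarith
  intro t ht
  set n := ⌊(t - d) / T0⌋₊
  set u := d + n * T0
  have hut : u ≤ t := by
    have := Nat.floor_le (div_nonneg (sub_nonneg.2 ht) hT0pos.le)
    rw [le_div_iff₀ hT0pos] at this; linarith
  have htu : t < u + T0 := by
    have := Nat.lt_floor_add_one ((t - d) / T0)
    rw [div_lt_iff₀ hT0pos] at this; linarith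
  have hramp := hx.ramp_of_initial ha hat0 hT0eq hd hφneg hφ0 n
  have hn : (0 : ℝ) ≤ n * T0 := by positivity
  obtain ⟨hdescent, hramp'⟩ := hx.descent_and_ramp_of_ramp ha hat0 hT0eq (by linarith) hramp
  rw [show t - d = t - u + n * T0 by ring, (Function.Periodic.nat_mul hx0per n) (t - u)]
  rcases le_or_gt t (u + 1) with h1 | h1
  · rw [hramp t ⟨hut, h1⟩, hx0a _ ⟨by linarith, by linarith⟩]
  rcases le_or_gt t (u + t0 + 1) with h2 | h2
  · rw [hdescent t ⟨h1.le, h2⟩, hx0b _ ⟨by linarith, by linarith⟩]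
  · rw [hramp' t ⟨h2.le, by linarith⟩, hx0c _ ⟨by linarith, by linarith⟩]

/-- a solution with a negative initial function taking the value
`-d` (`d ≥ 0`) at `0` coincides with `x0 (t - d)` for all `t ≥ d`. -/
theorem stmt_2 (a : ℝ) (ha : 0 < a) (d : ℝ) (hd : 0 ≤ d) (t0 T0 : ℝ)
    (ht0 : t0 = (a + 1) / a) (hT0 : T0 = (a + 1) ^ 2 / a)
    (φ : ℝ → ℝ) (hφc : ContinuousOn φ (Set.Icc (-1 : ℝ) 0))
    (hφneg : ∀ t ∈ Set.Ico (-1 : ℝ) 0, φ t < 0) (hφ0 : φ 0 = -d)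
    (x : ℝ → ℝ) (hx : IsSolution a φ x)
    (x0 : ℝ → ℝ)
    (hx0per : ∀ t : ℝ, x0 (t + T0) = x0 t)
    (hx0a : ∀ t ∈ Set.Icc (0 : ℝ) 1, x0 t = t)
    (hx0b : ∀ t ∈ Set.Icc (1 : ℝ) (t0 + 1), x0 t = -a * (t - t0))
    (hx0c : ∀ t ∈ Set.Icc (t0 + 1) T0, x0 t = t - T0) :
    ∀ t : ℝ, d ≤ t → x t = x0 (t - d) :=
  stmt_2_general a ha d hd t0 T0 ht0 hT0 φ hφneg hφ0 x hx x0 hx0per hx0a hx0b hx0c
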